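/- Fix ε = −1 (first type) or ε = +1 (second type). If δ = λ₁ + λ₂ + λ₃ − λ₄ = 0 and the functions f and g are linearly dependent (i.e., there exist constants a, b, not both zero, with a·f(u) + b·g(u) = 0 for all u ∈ J), then K_φ(u) = 0 for all u ∈ J, i.e., the surface S_i is weighted flat. -/
import Mathlib


open Real Set

/-- Weighted Gaussian curvature of the timelike general rotational surface `S_i`
(`ε = -1` for the first type, `ε = 1` for the second type) in `E₁⁴` with
density `e^{λ₁x²+λ₂y²+λ₃z²+λ₄t²}`, where `δ = λ₁+λ₂+λ₃−λ₄`. -/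
noncomputable def Kphi (α β δ ε : ℝ) (f g : ℝ → ℝ) (u : ℝ) : ℝ :=
  (-2 * δ * (α ^ 2 * (f u) ^ 2 + ε * β ^ 2 * (g u) ^ 2) ^ 2
      * (-ε * (deriv f u) ^ 2 + (deriv g u) ^ 2) ^ 2
    + α ^ 2 * β ^ 2 * (g u * deriv f u - f u * deriv g u) ^ 2
      * (-ε * (deriv f u) ^ 2 + (deriv g u) ^ 2)
    + (ε * α ^ 2 * (f u) ^ 2 + β ^ 2 * (g u) ^ 2)
      * (β ^ 2 * g u * deriv f u + α ^ 2 * f u * deriv g u)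
      * (deriv (deriv f) u * deriv g u - deriv f u * deriv (deriv g) u))
  / ((α ^ 2 * (f u) ^ 2 + ε * β ^ 2 * (g u) ^ 2) ^ 2
      * (-ε * (deriv f u) ^ 2 + (deriv g u) ^ 2) ^ 2)

lemma deriv_on_const_mul (J : Set ℝ) (hJ : IsOpen J) (h k : ℝ → ℝ) (c : ℝ)
    (heq : ∀ x ∈ J, h x = c * k x) : ∀ u ∈ J, deriv h u = c * deriv k u := by
  intro u hu
  have hev : h =ᶠ[nhds u] fun x => c * k x := by
    filter_upwards [hJ.mem_nhds hu] with x hx using heq x hx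
  rw [hev.deriv_eq, deriv_const_mul_field]

theorem weighted_flat_of_linear_dependent
    (J : Set ℝ) (hJo : IsOpen J) (hJc : J.OrdConnected)
    (f g : ℝ → ℝ) (hf : ContDiffOn ℝ (⊤ : ℕ∞) f J) (hg : ContDiffOn ℝ (⊤ : ℕ∞) g J)
    (α β l1 l2 l3 l4 δ ε : ℝ) (hα : 0 < α) (hβ : 0 < β)
    (hl : ¬(l1 = 0 ∧ l2 = 0 ∧ l3 = 0 ∧ l4 = 0)) (hδ : δ = l1 + l2 + l3 - l4)
    (hε : ε = -1 ∨ ε = 1)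
    (hreg : ∀ u ∈ J, 0 < -ε * (deriv f u) ^ 2 + (deriv g u) ^ 2
        ∧ 0 < ε * α ^ 2 * (f u) ^ 2 + β ^ 2 * (g u) ^ 2)
    (hδ0 : δ = 0)
    (hdep : ∃ a b : ℝ, (a ≠ 0 ∨ b ≠ 0) ∧ ∀ u ∈ J, a * f u + b * g u = 0) :
    ∀ u ∈ J, Kphi α β δ ε f g u = 0 := by
  obtain ⟨a, b, hab, h0⟩ := hdep
  rcases hab with ha | hb
  · -- f = (-b/a) • g on J
    set c : ℝ := -b / a with hc
    have heq : ∀ x ∈ J, f x = c * g x := by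
      intro x hx
      have := h0 x hx
      rw [hc]
      field_simp
      linarith
    have h1 := deriv_on_const_mul J hJo f g c heq
    have h2 := deriv_on_const_mul J hJo (deriv f) (deriv g) c h1
    intro u hu
    rw [Kphi, hδ0, heq u hu, h1 u hu, h2 u hu]
    rw [div_eq_zero_iff]
    left; ring
  · -- g = (-a/b) • f on J
    set c : ℝ := -a / b with hc
    have heq : ∀ x ∈ J, g x = c * f x := by
      intro x hx
      have := h0 x hx
      rw [hc]
      field_simp
      linarith
    have h1 := deriv_on_const_mul J hJo g f c heq
    have h2 := deriv_on_const_mul J hJo (deriv g) (deriv f) c h1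
    intro u hu
    rw [Kphi, hδ0, heq u hu, h1 u hu, h2 u hu]
    rw [div_eq_zero_iff]
    left; ring
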